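/- Suppose S ⊆ {v_1, …, v_n} is a solution of the instance. Let T be the tree with node set {A, B, Q_1, …, Q_n} and edge set {AB} ∪ {AQ_i : v_i ∈ S} ∪ {BQ_i : v_i ∉ S}. Then T is a clique tree of G_I; in the tree model defined by T, the subtrees T_{v_i}, T_{z_1}, T_{z_2} each have 0 leaves and each subtree T_{y_j} has exactly k leaves. Consequently, the vertex leafage of G_I is at most k. -/

import Mathlib

open SimpleGraph

/-- The degree of a vertex in a graph, via `Set.ncard`. -/
noncomputable def deg {W : Type*} (T : SimpleGraph W) (w : W) : ℕ :=
  (T.neighborSet w).ncard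

/-- The set of leaves (degree-one vertices) of a graph. -/
def leaves {W : Type*} (T : SimpleGraph W) : Set W :=
  {w | deg T w = 1}

/-- The number of leaves. -/
noncomputable def numLeaves {W : Type*} (T : SimpleGraph W) : ℕ :=
  (leaves T).ncard

/-- The set of leaves of the subgraph of `T` induced by `s`
(nodes of `s` with exactly one neighbour inside `s`). -/
def subLeaves {W : Type*} (T : SimpleGraph W) (s : Set W) : Set W :=
  {w | w ∈ s ∧ (T.neighborSet w ∩ s).ncard = 1}

/-- The number of leaves of the subtree induced by `s`. -/
noncomputable def numSubLeaves {W : Type*} (T : SimpleGraph W) (s : Set W) : ℕ :=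
  (subLeaves T s).ncard

/-- A tree model of a graph `G`: a finite host tree `T` together with nonempty
subtrees `sub u` such that distinct vertices are adjacent in `G` iff their
subtrees intersect. -/
structure TreeModel {V : Type*} (G : SimpleGraph V) where
  W : Type
  finW : Finite W
  T : SimpleGraph W
  tree : T.IsTree
  sub : V → Set W
  sub_nonempty : ∀ u, (sub u).Nonempty
  sub_conn : ∀ u, (T.induce (sub u)).Connected
  adj_iff : ∀ u v, u ≠ v → (G.Adj u v ↔ (sub u ∩ sub v).Nonempty)

/-- The leafage of a chordal graph: the minimum number of host-tree leaves over
all tree models. -/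
noncomputable def leafage {V : Type*} (G : SimpleGraph V) : ℕ :=
  sInf {n | ∃ M : TreeModel G, numLeaves M.T = n}

/-- The vertex leafage of a chordal graph: the least `k` such that `G` has a tree
model all of whose subtrees have at most `k` leaves. -/
noncomputable def vleafage {V : Type*} (G : SimpleGraph V) : ℕ :=
  sInf {k | ∃ M : TreeModel G, ∀ u, numSubLeaves M.T (M.sub u) ≤ k}

/-- A maximal clique of `G`. -/
def IsMaxClique {V : Type*} (G : SimpleGraph V) (C : Set V) : Prop :=
  G.IsClique C ∧ ∀ D, G.IsClique D → C ⊆ D → D = C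

/-- The type of maximal cliques of `G`. -/
abbrev MaxCliques {V : Type*} (G : SimpleGraph V) := {C : Set V // IsMaxClique G C}

/-- A clique tree of `G`: a tree whose nodes are exactly the maximal cliques of `G`,
such that every node on the path between nodes `C` and `C'` contains `C ∩ C'`. -/
structure CliqueTree {V : Type*} (G : SimpleGraph V) where
  T : SimpleGraph (MaxCliques G)
  tree : T.IsTree
  path_cond : ∀ (C C' : MaxCliques G) (p : T.Walk C C'), p.IsPath →
    ∀ C'' ∈ p.support, C.1 ∩ C'.1 ⊆ C''.1

/-- The subtree (node set) assigned to a vertex `u` in the tree model defined by a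
clique tree of `G`: the set of maximal cliques containing `u`. -/
def cliqueSub {V : Type*} (G : SimpleGraph V) (u : V) : Set (MaxCliques G) :=
  {C | u ∈ C.1}

/-- The set of nodes of degree at least 3. -/
def Hh {W : Type*} (T : SimpleGraph W) : Set W := {w | 3 ≤ deg T w}

/-- The set of edges incident to a node of degree at least 3. -/
def Ee {W : Type*} (T : SimpleGraph W) : Set (Sym2 W) :=
  {e | e ∈ T.edgeSet ∧ ∃ w ∈ e, w ∈ Hh T}

/-- The vertex set of the graph `G_I`: variable vertices `v i`, clause vertices `y j`,
and two extra vertices `z 0`, `z 1`. -/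
inductive GV (n m : ℕ) where
  | v : Fin n → GV n m
  | y : Fin m → GV n m
  | z : Fin 2 → GV n m
deriving DecidableEq

instance (n m : ℕ) : Finite (GV n m) :=
  Finite.of_surjective
    (fun x : (Fin n ⊕ Fin m ⊕ Fin 2) => match x with
      | Sum.inl i => GV.v i
      | Sum.inr (Sum.inl j) => GV.y j
      | Sum.inr (Sum.inr t) => GV.z t)
    (by
      intro g
      cases g with
      | v i => exact ⟨Sum.inl i, rfl⟩
      | y j => exact ⟨Sum.inr (Sum.inl j), rfl⟩
      | z t => exact ⟨Sum.inr (Sum.inr t), rfl⟩)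

/-- The split graph `G_I` of the reduction: `{y j}` is a clique, `{v i} ∪ {z t}` is an
independent set, `v i` is adjacent to `y j` iff `i ∈ C j`, and each `z t` is adjacent to
every `y j`. -/
def GI (n m : ℕ) (C : Fin m → Finset (Fin n)) : SimpleGraph (GV n m) :=
  SimpleGraph.fromRel (fun a b =>
    match a, b with
    | GV.y _, GV.y _ => True
    | GV.v i, GV.y j => i ∈ C j
    | GV.z _, GV.y _ => True
    | _, _ => False)

/-- The maximal clique `A = {z_1, y_1, …, y_m}`. -/
def setA (n m : ℕ) : Set (GV n m) := {GV.z 0} ∪ {x | ∃ j, x = GV.y j}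

/-- The maximal clique `B = {z_2, y_1, …, y_m}`. -/
def setB (n m : ℕ) : Set (GV n m) := {GV.z 1} ∪ {x | ∃ j, x = GV.y j}

/-- The maximal clique `Q_i = {v_i} ∪ {y_j : v_i ∈ C_j}`. -/
def setQ (n m : ℕ) (C : Fin m → Finset (Fin n)) (i : Fin n) : Set (GV n m) :=
  {GV.v i} ∪ {x | ∃ j, x = GV.y j ∧ i ∈ C j}

/-- The tree on the maximal cliques of `G_I` determined by a solution `S`:
its edges are `AB`, the edges `AQ_i` for `v_i ∈ S`, and the edges `BQ_i` for
`v_i ∉ S`. -/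
def TS (n m : ℕ) (C : Fin m → Finset (Fin n)) (S : Set (Fin n)) :
    SimpleGraph (MaxCliques (GI n m C)) :=
  SimpleGraph.fromRel (fun D D' =>
    (D.1 = setA n m ∧ D'.1 = setB n m) ∨
    (∃ i ∈ S, D.1 = setA n m ∧ D'.1 = setQ n m C i) ∨
    (∃ i ∉ S, D.1 = setB n m ∧ D'.1 = setQ n m C i))


/-!
The maximal cliques of `G_I` are the closed neighbourhoods `A = N[z_1]`, `B = N[z_2]` and
`Q_i = N[v_i]`: a clique through `z_t` or `v_i` lies in its closed neighbourhood, and any other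
clique consists of `y`'s only. Every `Q_i` is a leaf of `T`, so it lies on no cycle and is never
an inner vertex of a path; this makes `T` a tree and gives the path condition, because two
distinct maximal cliques share only `y`'s, which both `A` and `B` contain. The subtree of `y_j`
is `{A, B} ∪ {Q_i : v_i ∈ C_j}`; as `C_j` meets both `S` and its complement, `A` and `B` each
have two neighbours in it, so its leaves are exactly the `k` nodes `Q_i`. Finally, any clique
tree of a finite graph is a tree model, which bounds the vertex leafage.
-/

lemma Set.Subsingleton.ncard_ne_two {α : Type*} {s : Set α} (hs : s.Subsingleton) :
    s.ncard ≠ 2 := fun h => by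
  obtain ⟨a, b, hab, rfl⟩ := Set.ncard_eq_two.mp h
  exact hab (hs (by simp) (by simp))

namespace SimpleGraph

variable {V : Type*} {G : SimpleGraph V} {s : Set V} {u v w : V}

lemma Walk.IsCycle.notMem_support_of_subsingleton {c : G.Walk u u} (hc : c.IsCycle)
    (hw : (G.neighborSet w).Subsingleton) : w ∉ c.support := fun h =>
  (hw.anti (c.toSubgraph.neighborSet_subset w)).ncard_ne_two
    (hc.ncard_neighborSet_toSubgraph_eq_two h)

lemma Walk.IsPath.eq_or_eq_of_subsingleton {p : G.Walk u v} (hp : p.IsPath)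
    (hw : (G.neighborSet w).Subsingleton) (h : w ∈ p.support) : w = u ∨ w = v := by
  obtain ⟨i, rfl, hi⟩ := Walk.mem_support_iff_exists_getVert.mp h
  by_contra! hne
  have hi0 : i ≠ 0 := by rintro rfl; simp at hne
  have hil : i < p.length := lt_of_le_of_ne hi (by rintro rfl; simp at hne)
  exact (hw.anti (p.toSubgraph.neighborSet_subset _)).ncard_ne_two
    (hp.ncard_neighborSet_toSubgraph_internal_eq_two hi0 hil)

-- A bare `insert` in this statement would resolve to `SimpleGraph.IsClique.insert`.
lemma IsClique.subset_insert_neighborSet (hs : G.IsClique s) (hw : w ∈ s) :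
    s ⊆ Insert.insert w (G.neighborSet w) := fun x hx => by
  rcases eq_or_ne x w with rfl | hxw
  · exact Set.mem_insert x _
  · exact Or.inr (hs hw hx hxw.symm)

end SimpleGraph

lemma isMaxClique_insert_neighborSet {V : Type*} {G : SimpleGraph V} {w : V}
    (h : G.IsClique (G.neighborSet w)) : IsMaxClique G (insert w (G.neighborSet w)) :=
  ⟨G.isClique_insert.mpr ⟨h, fun _ hb _ => hb⟩, fun _ hD hsub =>
    (hD.subset_insert_neighborSet (hsub (Set.mem_insert w _))).antisymm hsub⟩

section SubLeaves

variable {W : Type*} {T : SimpleGraph W} {s : Set W} {w : W}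

lemma numSubLeaves_eq_zero_of_subsingleton (hs : s.Subsingleton) : numSubLeaves T s = 0 := by
  suffices subLeaves T s = ∅ by rw [numSubLeaves, this, Set.ncard_empty]
  refine Set.eq_empty_of_forall_notMem fun w ⟨hw, hleaf⟩ => ?_
  obtain ⟨a, ha⟩ := Set.ncard_eq_one.mp hleaf
  obtain ⟨hadj, has⟩ : a ∈ T.neighborSet w ∩ s := ha ▸ rfl
  exact T.irrefl (hs hw has ▸ hadj)

lemma notMem_subLeaves_of_ne {a b : W} (ha : a ∈ T.neighborSet w ∩ s)
    (hb : b ∈ T.neighborSet w ∩ s) (hab : a ≠ b) : w ∉ subLeaves T s :=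
  fun ⟨_, hleaf⟩ => by
  obtain ⟨c, hc⟩ := Set.ncard_eq_one.mp hleaf
  rw [hc] at ha hb
  exact hab (ha.trans hb.symm)

lemma mem_subLeaves_of_neighborSet_eq {a : W} (hw : w ∈ s) (hN : T.neighborSet w = {a})
    (ha : a ∈ s) : w ∈ subLeaves T s :=
  ⟨hw, by rw [hN, Set.singleton_inter_of_mem ha, Set.ncard_singleton]⟩

end SubLeaves

section

variable {V : Type} {G : SimpleGraph V}

lemma exists_isMaxClique_superset [Finite V] {s : Set V} (hs : G.IsClique s) :
    ∃ D, IsMaxClique G D ∧ s ⊆ D := by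
  obtain ⟨D, hsD, hD⟩ := (Set.toFinite {t | G.IsClique t}).exists_le_maximal hs
  exact ⟨D, ⟨hD.prop, fun E hE hDE => (hD.eq_of_le hE hDE).symm⟩, hsD⟩

lemma cliqueSub_nonempty [Finite V] (u : V) : (cliqueSub G u).Nonempty := by
  obtain ⟨D, hD, huD⟩ := exists_isMaxClique_superset (G.isClique_singleton u)
  exact ⟨⟨D, hD⟩, huD rfl⟩

lemma adj_iff_cliqueSub_inter_nonempty [Finite V] {u v : V} (hne : u ≠ v) :
    G.Adj u v ↔ (cliqueSub G u ∩ cliqueSub G v).Nonempty := by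
  refine ⟨fun h => ?_, fun ⟨D, hu, hv⟩ => D.2.1 hu hv hne⟩
  obtain ⟨D, hD, huvD⟩ := exists_isMaxClique_superset (G.isClique_pair.mpr fun _ => h)
  exact ⟨⟨D, hD⟩, huvD (by simp), huvD (by simp)⟩

namespace CliqueTree

variable (T : CliqueTree G)

lemma induce_cliqueSub_preconnected (u : V) : (T.T.induce (cliqueSub G u)).Preconnected := by
  rintro ⟨D, hD⟩ ⟨D', hD'⟩
  let p := (T.tree.1.preconnected D D').some.toPath
  have hp : ∀ D'' ∈ p.1.support, D'' ∈ cliqueSub G u := fun D'' h =>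
    T.path_cond D D' p.1 p.2 D'' h ⟨hD, hD'⟩
  exact ⟨p.1.induce _ hp⟩

def toTreeModel [Finite V] : TreeModel G where
  W := MaxCliques G
  finW := inferInstance
  T := T.T
  tree := T.tree
  sub := cliqueSub G
  sub_nonempty := cliqueSub_nonempty
  sub_conn u := (connected_iff _).mpr
    ⟨T.induce_cliqueSub_preconnected u, (cliqueSub_nonempty u).to_subtype⟩
  adj_iff _ _ := adj_iff_cliqueSub_inter_nonempty

lemma vleafage_le [Finite V] {k : ℕ} (h : ∀ u, numSubLeaves T.T (cliqueSub G u) ≤ k) :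
    vleafage G ≤ k :=
  Nat.sInf_le ⟨T.toTreeModel, h⟩

end CliqueTree

end

section GI

variable {n m : ℕ} {C : Fin m → Finset (Fin n)}

@[simp] lemma GI_adj_y_y {j j' : Fin m} : (GI n m C).Adj (.y j) (.y j') ↔ j ≠ j' := by
  simp [GI]

lemma GI_adj_z (t : Fin 2) (x : GV n m) : (GI n m C).Adj (.z t) x ↔ ∃ j, x = .y j := by
  cases x <;> simp [GI]

lemma GI_adj_v (i : Fin n) (x : GV n m) :
    (GI n m C).Adj (.v i) x ↔ ∃ j, x = .y j ∧ i ∈ C j := by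
  cases x <;> simp [GI]

lemma isClique_neighborSet_z (t : Fin 2) :
    (GI n m C).IsClique ((GI n m C).neighborSet (.z t)) := by
  rintro _ ha _ hb hab
  obtain ⟨j, rfl⟩ := (GI_adj_z t _).mp ha
  obtain ⟨j', rfl⟩ := (GI_adj_z t _).mp hb
  simpa using hab

lemma isClique_neighborSet_v (i : Fin n) :
    (GI n m C).IsClique ((GI n m C).neighborSet (.v i)) := by
  rintro _ ha _ hb hab
  obtain ⟨j, rfl, -⟩ := (GI_adj_v i _).mp ha
  obtain ⟨j', rfl, -⟩ := (GI_adj_v i _).mp hb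
  simpa using hab

lemma setA_eq : setA n m = insert (.z 0) ((GI n m C).neighborSet (.z 0)) := by
  ext x; simp [setA, GI_adj_z]

lemma setB_eq : setB n m = insert (.z 1) ((GI n m C).neighborSet (.z 1)) := by
  ext x; simp [setB, GI_adj_z]

lemma setQ_eq (i : Fin n) : setQ n m C i = insert (.v i) ((GI n m C).neighborSet (.v i)) := by
  ext x; simp [setQ, GI_adj_v]

lemma isMaxClique_setA : IsMaxClique (GI n m C) (setA n m) :=
  setA_eq ▸ isMaxClique_insert_neighborSet (isClique_neighborSet_z 0)

lemma isMaxClique_setB : IsMaxClique (GI n m C) (setB n m) :=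
  setB_eq ▸ isMaxClique_insert_neighborSet (isClique_neighborSet_z 1)

lemma isMaxClique_setQ (i : Fin n) : IsMaxClique (GI n m C) (setQ n m C i) :=
  setQ_eq i ▸ isMaxClique_insert_neighborSet (isClique_neighborSet_v i)

lemma isMaxClique_GI_iff {D : Set (GV n m)} :
    IsMaxClique (GI n m C) D ↔ D = setA n m ∨ D = setB n m ∨ ∃ i, D = setQ n m C i := by
  refine ⟨fun hD => ?_, ?_⟩
  · have eq_of_subset {E} (hE : IsMaxClique (GI n m C) E) (h : D ⊆ E) : D = E :=
      (hD.2 E hE.1 h).symm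
    by_cases h0 : GV.z 0 ∈ D
    · exact .inl <| eq_of_subset isMaxClique_setA <|
        setA_eq ▸ hD.1.subset_insert_neighborSet h0
    by_cases h1 : GV.z 1 ∈ D
    · exact .inr <| .inl <| eq_of_subset isMaxClique_setB <|
        setB_eq ▸ hD.1.subset_insert_neighborSet h1
    by_cases hv : ∃ i, GV.v i ∈ D
    · obtain ⟨i, hi⟩ := hv
      exact .inr <| .inr ⟨i, eq_of_subset (isMaxClique_setQ i) <|
        setQ_eq i ▸ hD.1.subset_insert_neighborSet hi⟩
    refine .inl <| eq_of_subset isMaxClique_setA fun x hx => ?_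
    cases x with
    | v i => exact (hv ⟨i, hx⟩).elim
    | y j => simp [setA]
    | z t => fin_cases t <;> contradiction
  · rintro (rfl | rfl | ⟨i, rfl⟩)
    exacts [isMaxClique_setA, isMaxClique_setB, isMaxClique_setQ i]

end GI

section Nodes

variable {n m : ℕ} {C : Fin m → Finset (Fin n)}

def nodeA : MaxCliques (GI n m C) := ⟨setA n m, isMaxClique_setA⟩

def nodeB : MaxCliques (GI n m C) := ⟨setB n m, isMaxClique_setB⟩

def nodeQ (i : Fin n) : MaxCliques (GI n m C) := ⟨setQ n m C i, isMaxClique_setQ i⟩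

@[simp] lemma mem_nodeA {x : GV n m} :
    x ∈ (nodeA : MaxCliques (GI n m C)).1 ↔ x = .z 0 ∨ ∃ j, x = .y j := by
  simp [nodeA, setA]

@[simp] lemma mem_nodeB {x : GV n m} :
    x ∈ (nodeB : MaxCliques (GI n m C)).1 ↔ x = .z 1 ∨ ∃ j, x = .y j := by
  simp [nodeB, setB]

@[simp] lemma mem_nodeQ {x : GV n m} {i : Fin n} :
    x ∈ (nodeQ i : MaxCliques (GI n m C)).1 ↔ x = .v i ∨ ∃ j, x = .y j ∧ i ∈ C j := by
  simp [nodeQ, setQ]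

@[simp] lemma val_eq_setA_iff {D : MaxCliques (GI n m C)} : D.1 = setA n m ↔ D = nodeA :=
  (Subtype.ext_iff (a2 := nodeA)).symm

@[simp] lemma val_eq_setB_iff {D : MaxCliques (GI n m C)} : D.1 = setB n m ↔ D = nodeB :=
  (Subtype.ext_iff (a2 := nodeB)).symm

@[simp] lemma val_eq_setQ_iff {D : MaxCliques (GI n m C)} {i : Fin n} :
    D.1 = setQ n m C i ↔ D = nodeQ i :=
  (Subtype.ext_iff (a2 := nodeQ i)).symm

lemma node_cases (D : MaxCliques (GI n m C)) : D = nodeA ∨ D = nodeB ∨ ∃ i, D = nodeQ i := by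
  simpa using isMaxClique_GI_iff.mp D.2

@[simp] lemma nodeA_ne_nodeB : (nodeA : MaxCliques (GI n m C)) ≠ nodeB := fun h => by
  simpa using congrArg (GV.z 0 ∈ ·.1) h

@[simp] lemma nodeA_ne_nodeQ (i : Fin n) : (nodeA : MaxCliques (GI n m C)) ≠ nodeQ i :=
  fun h => by simpa using congrArg (GV.z 0 ∈ ·.1) h

@[simp] lemma nodeQ_ne_nodeA (i : Fin n) : (nodeQ i : MaxCliques (GI n m C)) ≠ nodeA :=
  (nodeA_ne_nodeQ i).symm

@[simp] lemma nodeB_ne_nodeQ (i : Fin n) : (nodeB : MaxCliques (GI n m C)) ≠ nodeQ i :=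
  fun h => by simpa using congrArg (GV.z 1 ∈ ·.1) h

@[simp] lemma nodeQ_ne_nodeB (i : Fin n) : (nodeQ i : MaxCliques (GI n m C)) ≠ nodeB :=
  (nodeB_ne_nodeQ i).symm

lemma nodeQ_injective : Function.Injective (nodeQ : Fin n → MaxCliques (GI n m C)) :=
  fun i _ h => by simpa using congrArg (GV.v i ∈ ·.1) h

lemma cliqueSub_v (i : Fin n) : cliqueSub (GI n m C) (.v i) = {nodeQ i} := by
  ext D
  rcases node_cases D with rfl | rfl | ⟨i', rfl⟩ <;>
    simp [cliqueSub, nodeQ_injective.eq_iff, eq_comm]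

lemma cliqueSub_z_zero : cliqueSub (GI n m C) (.z 0) = {nodeA} := by
  ext D
  rcases node_cases D with rfl | rfl | ⟨_, rfl⟩ <;> simp [cliqueSub, nodeA_ne_nodeB.symm]

lemma cliqueSub_z_one : cliqueSub (GI n m C) (.z 1) = {nodeB} := by
  ext D
  rcases node_cases D with rfl | rfl | ⟨_, rfl⟩ <;> simp [cliqueSub]

lemma cliqueSub_y (j : Fin m) :
    cliqueSub (GI n m C) (.y j) = {nodeA, nodeB} ∪ nodeQ '' C j := by
  ext D
  rcases node_cases D with rfl | rfl | ⟨i, rfl⟩ <;> simp [cliqueSub, nodeQ_injective.eq_iff]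

lemma cliqueSub_subsingleton {x : GV n m} (hx : ∀ j, x ≠ .y j) :
    (cliqueSub (GI n m C) x).Subsingleton := by
  cases x with
  | v i => simp [cliqueSub_v]
  | y j => exact (hx j rfl).elim
  | z t => fin_cases t <;> simp [cliqueSub_z_zero, cliqueSub_z_one]

end Nodes

section TS

variable {n m : ℕ} {C : Fin m → Finset (Fin n)} {S : Set (Fin n)}

lemma TS_adj_nodeA_nodeB : (TS n m C S).Adj nodeA nodeB := by
  simp [TS]

lemma TS_adj_nodeQ {i : Fin n} {D : MaxCliques (GI n m C)} :
    (TS n m C S).Adj (nodeQ i) D ↔ (i ∈ S ∧ D = nodeA) ∨ (i ∉ S ∧ D = nodeB) := by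
  rcases node_cases D with rfl | rfl | ⟨i', rfl⟩ <;>
    simp [TS, nodeQ_injective.eq_iff]

lemma neighborSet_nodeQ_of_mem {i : Fin n} (hi : i ∈ S) :
    (TS n m C S).neighborSet (nodeQ i) = {nodeA} := by
  ext D; simp [TS_adj_nodeQ, hi]

lemma neighborSet_nodeQ_of_notMem {i : Fin n} (hi : i ∉ S) :
    (TS n m C S).neighborSet (nodeQ i) = {nodeB} := by
  ext D; simp [TS_adj_nodeQ, hi]

lemma neighborSet_nodeQ_subsingleton (i : Fin n) :
    ((TS n m C S).neighborSet (nodeQ i)).Subsingleton := by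
  by_cases hi : i ∈ S
  · simp [neighborSet_nodeQ_of_mem hi]
  · simp [neighborSet_nodeQ_of_notMem hi]

lemma TS_reachable_nodeA (D : MaxCliques (GI n m C)) : (TS n m C S).Reachable D nodeA := by
  have hB : (TS n m C S).Reachable nodeB nodeA := TS_adj_nodeA_nodeB.symm.reachable
  rcases node_cases D with rfl | rfl | ⟨i, rfl⟩
  · rfl
  · exact hB
  · by_cases hi : i ∈ S
    · exact (TS_adj_nodeQ.mpr (.inl ⟨hi, rfl⟩)).reachable
    · exact (TS_adj_nodeQ.mpr (.inr ⟨hi, rfl⟩)).reachable.trans hB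

lemma TS_connected : (TS n m C S).Connected :=
  (connected_iff _).mpr ⟨fun D D' => (TS_reachable_nodeA D).trans (TS_reachable_nodeA D').symm,
    ⟨nodeA⟩⟩

lemma TS_isAcyclic : (TS n m C S).IsAcyclic := by
  intro u c hc
  have on_AB {D} (hD : D ∈ c.support) : D = nodeA ∨ D = nodeB := by
    rcases node_cases D with h | h | ⟨i, rfl⟩
    exacts [.inl h, .inr h,
      (hc.notMem_support_of_subsingleton (neighborSet_nodeQ_subsingleton i) hD).elim]
  have hsnd := c.adj_snd hc.not_nil
  have hpen := c.adj_penultimate hc.not_nil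
  have hne := hc.snd_ne_penultimate
  -- `u`, `c.snd` and `c.penultimate` all lie in `{A, B}`, but the last two are distinct
  -- neighbours of `u`.
  rcases on_AB c.start_mem_support with rfl | rfl <;>
    rcases on_AB (c.getVert_mem_support 1) with h1 | h1 <;>
    rcases on_AB (c.getVert_mem_support (c.length - 1)) with h2 | h2 <;>
    simp_all [Walk.snd, Walk.penultimate]

lemma TS_isTree : (TS n m C S).IsTree := ⟨TS_connected, TS_isAcyclic⟩

lemma TS_path_cond (D D' : MaxCliques (GI n m C)) (p : (TS n m C S).Walk D D') (hp : p.IsPath)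
    (D'' : MaxCliques (GI n m C)) (hD'' : D'' ∈ p.support) : D.1 ∩ D'.1 ⊆ D''.1 := by
  rintro x ⟨hxD, hxD'⟩
  by_cases hx : ∃ j, x = .y j
  · obtain ⟨j, rfl⟩ := hx
    rcases node_cases D'' with rfl | rfl | ⟨i, rfl⟩
    · simp
    · simp
    · rcases hp.eq_or_eq_of_subsingleton (neighborSet_nodeQ_subsingleton i) hD'' with rfl | rfl
      exacts [hxD, hxD']
  · obtain rfl : D = D' := cliqueSub_subsingleton (by simpa using hx) hxD hxD'
    rw [Walk.nil_iff_support_eq.mp (Walk.isPath_iff_nil.mp hp), List.mem_singleton] at hD''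
    exact hD'' ▸ hxD

lemma subLeaves_cliqueSub_y {j : Fin m} (h1 : ((C j : Set (Fin n)) ∩ S).Nonempty)
    (h2 : ((C j : Set (Fin n)) \ S).Nonempty) :
    subLeaves (TS n m C S) (cliqueSub (GI n m C) (.y j)) = nodeQ '' C j := by
  obtain ⟨i₁, hi₁C, hi₁S⟩ := h1
  obtain ⟨i₂, hi₂C, hi₂S⟩ := h2
  have hA : nodeA ∈ cliqueSub (GI n m C) (.y j) := by simp [cliqueSub_y]
  have hB : nodeB ∈ cliqueSub (GI n m C) (.y j) := by simp [cliqueSub_y]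
  have hQ {i} (hi : i ∈ C j) : nodeQ i ∈ cliqueSub (GI n m C) (.y j) := by
    simp [cliqueSub_y, nodeQ_injective.eq_iff, hi]
  ext D
  refine ⟨fun hD => ?_, ?_⟩
  · rcases node_cases D with rfl | rfl | ⟨i, rfl⟩
    · have hAQ : (TS n m C S).Adj nodeA (nodeQ i₁) :=
        (TS_adj_nodeQ.mpr (.inl ⟨hi₁S, rfl⟩)).symm
      exact (notMem_subLeaves_of_ne ⟨TS_adj_nodeA_nodeB, hB⟩ ⟨hAQ, hQ hi₁C⟩
        (nodeB_ne_nodeQ i₁) hD).elim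
    · have hBQ : (TS n m C S).Adj nodeB (nodeQ i₂) :=
        (TS_adj_nodeQ.mpr (.inr ⟨hi₂S, rfl⟩)).symm
      exact (notMem_subLeaves_of_ne ⟨TS_adj_nodeA_nodeB.symm, hA⟩ ⟨hBQ, hQ hi₂C⟩
        (nodeA_ne_nodeQ i₂) hD).elim
    · simpa [cliqueSub_y, nodeQ_injective.eq_iff] using hD.1
  · rintro ⟨i, hi, rfl⟩
    by_cases hiS : i ∈ S
    · exact mem_subLeaves_of_neighborSet_eq (hQ hi) (neighborSet_nodeQ_of_mem hiS) hA
    · exact mem_subLeaves_of_neighborSet_eq (hQ hi) (neighborSet_nodeQ_of_notMem hiS) hB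

lemma numSubLeaves_cliqueSub_y {j : Fin m} (h1 : ((C j : Set (Fin n)) ∩ S).Nonempty)
    (h2 : ((C j : Set (Fin n)) \ S).Nonempty) :
    numSubLeaves (TS n m C S) (cliqueSub (GI n m C) (.y j)) = (C j).card := by
  rw [numSubLeaves, subLeaves_cliqueSub_y h1 h2, Set.ncard_image_of_injective _ nodeQ_injective,
    Set.ncard_coe_finset]

end TS

theorem stmt6_general (k n m : ℕ)
    (C : Fin m → Finset (Fin n)) (hC : ∀ j, (C j).card = k)
    (S : Set (Fin n))
    (hS : ∀ j, ((↑(C j) : Set (Fin n)) ∩ S).Nonempty ∧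
               ((↑(C j) : Set (Fin n)) \ S).Nonempty) :
    (TS n m C S).IsTree ∧
    (∀ (D D' : MaxCliques (GI n m C)) (p : (TS n m C S).Walk D D'), p.IsPath →
      ∀ D'' ∈ p.support, D.1 ∩ D'.1 ⊆ D''.1) ∧
    (∀ i : Fin n, numSubLeaves (TS n m C S) (cliqueSub (GI n m C) (GV.v i)) = 0) ∧
    (∀ t : Fin 2, numSubLeaves (TS n m C S) (cliqueSub (GI n m C) (GV.z t)) = 0) ∧
    (∀ j : Fin m, numSubLeaves (TS n m C S) (cliqueSub (GI n m C) (GV.y j)) = k) ∧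
    vleafage (GI n m C) ≤ k := by
  let T : CliqueTree (GI n m C) := ⟨TS n m C S, TS_isTree, TS_path_cond⟩
  have hv (i : Fin n) : numSubLeaves T.T (cliqueSub (GI n m C) (.v i)) = 0 :=
    numSubLeaves_eq_zero_of_subsingleton (cliqueSub_subsingleton (by simp))
  have hz (t : Fin 2) : numSubLeaves T.T (cliqueSub (GI n m C) (.z t)) = 0 :=
    numSubLeaves_eq_zero_of_subsingleton (cliqueSub_subsingleton (by simp))
  have hy (j : Fin m) : numSubLeaves T.T (cliqueSub (GI n m C) (.y j)) = k :=
    (numSubLeaves_cliqueSub_y (hS j).1 (hS j).2).trans (hC j)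
  refine ⟨T.tree, T.path_cond, hv, hz, hy, T.vleafage_le ?_⟩
  rintro (i | j | t)
  exacts [(hv i).trans_le k.zero_le, (hy j).le, (hz t).trans_le k.zero_le]

/-- If `S` is a solution of the instance, then the tree `T` with node set
`{A, B, Q_1, …, Q_n}` and edge set `{AB} ∪ {AQ_i : v_i ∈ S} ∪ {BQ_i : v_i ∉ S}` is a
clique tree of `G_I`; in the tree model defined by `T` the subtrees of the vertices
`v_i`, `z_1`, `z_2` have `0` leaves, and the subtree of each `y_j` has exactly `k`
leaves. Consequently, the vertex leafage of `G_I` is at most `k`. -/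
theorem stmt6 (k n m : ℕ) (hk : 3 ≤ k) (hn : k ≤ n) (hm : 1 ≤ m)
    (C : Fin m → Finset (Fin n)) (hC : ∀ j, (C j).card = k)
    (S : Set (Fin n))
    (hS : ∀ j, ((↑(C j) : Set (Fin n)) ∩ S).Nonempty ∧
               ((↑(C j) : Set (Fin n)) \ S).Nonempty) :
    (TS n m C S).IsTree ∧
    (∀ (D D' : MaxCliques (GI n m C)) (p : (TS n m C S).Walk D D'), p.IsPath →
      ∀ D'' ∈ p.support, D.1 ∩ D'.1 ⊆ D''.1) ∧
    (∀ i : Fin n, numSubLeaves (TS n m C S) (cliqueSub (GI n m C) (GV.v i)) = 0) ∧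
    (∀ t : Fin 2, numSubLeaves (TS n m C S) (cliqueSub (GI n m C) (GV.z t)) = 0) ∧
    (∀ j : Fin m, numSubLeaves (TS n m C S) (cliqueSub (GI n m C) (GV.y j)) = k) ∧
    vleafage (GI n m C) ≤ k :=
  stmt6_general k n m C hC S hS
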